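/- arXiv:1902.09758 — 2 statements merged into one kernel-verified Lean document; each statement's English description precedes it below -/
import Mathlib

section
/- Let P̃ : [0,T] → S^k be continuous with P̃(t) ≥ 0 for all t, and suppose for each t the value function identity holds: for a controlled linear system with cost J, the optimal cost from initial state x at time t equals xᵀ P̃(t) x. If P̃ and P̂ are two such nonnegative solutions of the Riccati equation (with the same coefficients) satisfying P̃(T) ≥ P̂(T), and each is the value function of the LQ problem with respective terminal weight, then P̃(t) ≥ P̂(t) for all t ∈ [0,T]. Equivalently (a purely ODE formulation): if P̃ and P̂ solve P'(t) + P A + Aᵀ P + Cᵀ P C + Q - (Bᵀ P + Dᵀ P C)ᵀ (R + Dᵀ P D)⁻¹ (Bᵀ P + Dᵀ P C) = 0 on [0,T] with R + Dᵀ P̃ D > 0 and R + Dᵀ P̂ D > 0 and P̃(T) ≥ P̂(T), then P̃(t) ≥ P̂(t) for all t. -/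
/-!
The difference `Δ = P̃ - P̂` of two solutions solves a linear backward Lyapunov equation
`-Δ' = Δ F + Fᵀ Δ + Gᵀ Δ G + N` with `F = A + B K`, `G = C + D K`, where `K` is the optimal
gain of `P̃`, and `N = (K - K̂)ᵀ (R + Dᵀ P̂ D) (K - K̂) ≥ 0`; this comes from completing the square
in the closed-loop Lyapunov operator. Such an equation propagates `Δ(T) ≥ 0` backwards: if
`Δ + ε e^{(κ+1)(T-t)} I` lost positive definiteness, then at the last time `t₁` it does so, with
kernel vector `x`, the function `t ↦ xᵀ(Δ + ε e^{(κ+1)(T-t)} I)x` is minimal at `t₁` on `[t₁, T]`,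
yet its derivative there is negative, since on that kernel the right-hand side is bounded by
`κ ε e^{(κ+1)(T-t₁)} |x|²`. Letting `ε → 0` gives `Δ ≥ 0`.
-/

open Matrix

attribute [local instance] Matrix.normedAddCommGroup Matrix.normedSpace

open Set Filter Topology

section Continuity

variable {m n p X R : Type*} [TopologicalSpace X] [TopologicalSpace R] {s : Set X}

theorem ContinuousOn.matrix_transpose {A : X → Matrix m n R} (hA : ContinuousOn A s) :
    ContinuousOn (fun x => (A x)ᵀ) s :=
  continuous_id.matrix_transpose.comp_continuousOn hA

theorem ContinuousOn.matrix_mul [Fintype n] [Mul R] [AddCommMonoid R] [ContinuousAdd R]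
    [ContinuousMul R] {A : X → Matrix m n R} {B : X → Matrix n p R} (hA : ContinuousOn A s)
    (hB : ContinuousOn B s) : ContinuousOn (fun x => A x * B x) s :=
  (continuous_fst.matrix_mul continuous_snd).comp_continuousOn (hA.prodMk hB)

theorem ContinuousOn.matrix_inv [Fintype n] [DecidableEq n] [Field R] [IsTopologicalRing R]
    [ContinuousInv₀ R] {A : X → Matrix n n R} (hA : ContinuousOn A s)
    (hdet : ∀ x ∈ s, (A x).det ≠ 0) : ContinuousOn (fun x => (A x)⁻¹) s := fun x hx =>
  (continuousAt_matrix_inv _ (by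
    rw [Ring.inverse_eq_inv']; exact continuousAt_inv₀ (hdet x hx))).comp_continuousWithinAt
    (hA x hx)

end Continuity

theorem HasDerivAt.nonneg_of_isMinOn_Icc {f : ℝ → ℝ} {f' a b : ℝ}
    (hf : HasDerivAt f f' a) (hab : a < b) (hmin : IsMinOn f (Icc a b) a) : 0 ≤ f' := by
  have hdir : b - a ∈ posTangentConeAt (Icc a b) a :=
    sub_mem_posTangentConeAt_of_segment_subset (segment_eq_Icc hab.le ▸ Subset.rfl)
  have := hmin.localize.hasFDerivWithinAt_nonneg hf.hasDerivWithinAt.hasFDerivWithinAt hdir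
  simp only [ContinuousLinearMap.toSpanSingleton_apply, smul_eq_mul] at this
  exact nonneg_of_mul_nonneg_right this (sub_pos.2 hab)

namespace Matrix

variable {n X : Type*} [Fintype n]

theorem smul_dotProduct_mulVec_smul (M : Matrix n n ℝ) (r : ℝ) (x : n → ℝ) :
    (r • x) ⬝ᵥ M *ᵥ (r • x) = r ^ 2 * (x ⬝ᵥ M *ᵥ x) := by
  simp only [mulVec_smul, dotProduct_smul, smul_dotProduct, smul_eq_mul]; ring

theorem dotProduct_mulVec_le_card_mul_norm (M : Matrix n n ℝ) (x : n → ℝ) :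
    x ⬝ᵥ M *ᵥ x ≤ Fintype.card n * ‖M‖ * (x ⬝ᵥ x) := by
  have hterm : ∀ i j, x i * (M i j * x j) ≤ ‖M‖ / 2 * (x i * x i + x j * x j) := fun i j => by
    have hM : |M i j| ≤ ‖M‖ := by simpa using M.norm_entry_le_entrywise_sup_norm (i := i) (j := j)
    nlinarith [abs_le.mp hM, sq_nonneg (x i - x j), sq_nonneg (x i + x j), norm_nonneg M]
  calc x ⬝ᵥ M *ᵥ x = ∑ i, ∑ j, x i * (M i j * x j) := by
        simp only [dotProduct, mulVec, Finset.mul_sum]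
    _ ≤ ∑ i, ∑ j, ‖M‖ / 2 * (x i * x i + x j * x j) :=
        Finset.sum_le_sum fun i _ => Finset.sum_le_sum fun j _ => hterm i j
    _ = Fintype.card n * ‖M‖ * (x ⬝ᵥ x) := by
        simp only [← Finset.mul_sum, Finset.sum_add_distrib, Finset.sum_const, Finset.card_univ,
          nsmul_eq_mul, dotProduct]
        rw [show ∑ i, x i * (Fintype.card n * x i) = Fintype.card n * ∑ i, x i * x i by
          rw [Finset.mul_sum]; exact Finset.sum_congr rfl fun i _ => by ring]
        ring

theorem posDef_of_forall_mem_sphere {M : Matrix n n ℝ} (hM : M.IsHermitian)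
    (h : ∀ u ∈ Metric.sphere (0 : n → ℝ) 1, 0 < u ⬝ᵥ M *ᵥ u) : M.PosDef := by
  refine .of_dotProduct_mulVec_pos hM fun x hx => ?_
  have hx' : ‖x‖ ≠ 0 := norm_ne_zero_iff.mpr hx
  have := h (‖x‖⁻¹ • x) (by simp [norm_smul, hx'])
  rw [smul_dotProduct_mulVec_smul] at this
  exact pos_of_mul_pos_right this (by positivity)

theorem _root_.IsCompact.exists_forall_dotProduct_mulVec_le [TopologicalSpace X] {s : Set X}
    (hs : IsCompact s) {H : X → Matrix n n ℝ} (hH : ContinuousOn H s) :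
    ∃ K, ∀ t ∈ s, ∀ x, x ⬝ᵥ H t *ᵥ x ≤ K * (x ⬝ᵥ x) := by
  obtain ⟨β, hβ⟩ := hs.exists_bound_of_continuousOn hH
  refine ⟨Fintype.card n * β, fun t ht x => (dotProduct_mulVec_le_card_mul_norm _ _).trans ?_⟩
  have hx : 0 ≤ x ⬝ᵥ x := by simpa using dotProduct_self_star_nonneg x
  gcongr
  exact hβ t ht

theorem _root_.HasDerivAt.dotProduct_mulVec_self {Γ : ℝ → Matrix n n ℝ}
    {Γ' : Matrix n n ℝ} {t : ℝ} (x : n → ℝ) (h : HasDerivAt Γ Γ' t) :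
    HasDerivAt (fun τ => x ⬝ᵥ Γ τ *ᵥ x) (x ⬝ᵥ Γ' *ᵥ x) t :=
  let ℓ : Matrix n n ℝ →ₗ[ℝ] ℝ :=
    { toFun := fun M => x ⬝ᵥ M *ᵥ x
      map_add' := fun M N => by simp [add_mulVec, dotProduct_add]
      map_smul' := fun c M => by simp [smul_mulVec] }
  (LinearMap.toContinuousLinearMap ℓ).hasFDerivAt.comp_hasDerivAt t h

theorem isCompact_setOf_not_posDef {Γ : ℝ → Matrix n n ℝ} {a b : ℝ}
    (hΓ : ContinuousOn Γ (Icc a b)) (hsymm : ∀ t ∈ Icc a b, (Γ t).IsHermitian) :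
    IsCompact {t ∈ Icc a b | ¬(Γ t).PosDef} := by
  set S := (Icc a b ×ˢ Metric.sphere (0 : n → ℝ) 1) ∩
    (fun z : ℝ × (n → ℝ) => z.2 ⬝ᵥ Γ z.1 *ᵥ z.2) ⁻¹' Iic 0
  have hK : IsCompact (Icc a b ×ˢ Metric.sphere (0 : n → ℝ) 1) :=
    isCompact_Icc.prod (isCompact_sphere 0 1)
  have hS : IsCompact S := by
    refine hK.of_isClosed_subset ?_ inter_subset_left
    refine ContinuousOn.preimage_isClosed_of_isClosed ?_ hK.isClosed isClosed_Iic
    exact (continuous_snd.dotProduct (continuous_fst.matrix_mulVec continuous_snd))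
      |>.comp_continuousOn ((hΓ.comp continuousOn_fst fun z hz => hz.1).prodMk continuousOn_snd)
  convert hS.image continuous_fst using 1
  ext t
  constructor
  · rintro ⟨ht, hnot⟩
    by_contra! hpos
    exact hnot (posDef_of_forall_mem_sphere (hsymm t ht) fun u hu =>
      not_le.1 fun hq => hpos ⟨(t, u), ⟨⟨ht, hu⟩, hq⟩, rfl⟩)
  · rintro ⟨⟨t, u⟩, ⟨⟨ht, hu⟩, hq⟩, rfl⟩
    have hu0 : u ≠ 0 := ne_zero_of_mem_sphere one_ne_zero ⟨u, hu⟩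
    exact ⟨ht, fun hpos => (hpos.dotProduct_mulVec_pos hu0).not_ge (by simpa using hq)⟩

theorem posDef_of_hasDerivAt_of_dotProduct_mulVec_neg {Γ Γ' : ℝ → Matrix n n ℝ} {a b : ℝ}
    (hsymm : ∀ t ∈ Icc a b, (Γ t).IsHermitian) (hΓ : ∀ t ∈ Icc a b, HasDerivAt Γ (Γ' t) t)
    (hb : (Γ b).PosDef)
    (hker : ∀ t ∈ Ico a b, (Γ t).PosSemidef → ∀ x ≠ 0, Γ t *ᵥ x = 0 → x ⬝ᵥ Γ' t *ᵥ x < 0) :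
    ∀ t ∈ Icc a b, (Γ t).PosDef := by
  classical
  by_contra! ⟨t₀, ht₀, hnot₀⟩
  have hΓc : ContinuousOn Γ (Icc a b) := fun t ht => (hΓ t ht).continuousAt.continuousWithinAt
  obtain ⟨t₁, ⟨ht₁, hnot₁⟩, hmax⟩ :=
    (isCompact_setOf_not_posDef hΓc hsymm).exists_isGreatest ⟨t₀, ht₀, hnot₀⟩
  have hlater : ∀ τ ∈ Ioc t₁ b, (Γ τ).PosDef := fun τ hτ => by
    by_contra hnot
    exact (hmax ⟨⟨ht₁.1.trans hτ.1.le, hτ.2⟩, hnot⟩).not_gt hτ.1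
  have ht₁b : t₁ < b := ht₁.2.lt_of_ne fun h => hnot₁ (h ▸ hb)
  have hpsd : (Γ t₁).PosSemidef := by
    refine .of_dotProduct_mulVec_nonneg (hsymm t₁ ht₁) fun y => ?_
    have hcont : ContinuousWithinAt (fun τ => star y ⬝ᵥ Γ τ *ᵥ y) (Ioi t₁) t₁ :=
      (((hΓ t₁ ht₁).dotProduct_mulVec_self y).continuousAt.congr (by simp)).continuousWithinAt
    refine ge_of_tendsto hcont ?_
    filter_upwards [Ioc_mem_nhdsGT ht₁b] with τ hτ
    exact (hlater τ hτ).posSemidef.dotProduct_mulVec_nonneg y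
  obtain ⟨x, hx0, hkerx⟩ : ∃ x ≠ 0, Γ t₁ *ᵥ x = 0 := by
    rwa [hpsd.posDef_iff_isUnit, isUnit_iff_isUnit_det, isUnit_iff_ne_zero, not_not,
      ← exists_mulVec_eq_zero_iff] at hnot₁
  have hmin : IsMinOn (fun τ => x ⬝ᵥ Γ τ *ᵥ x) (Icc t₁ b) t₁ := fun τ hτ => by
    rcases hτ.1.eq_or_lt with h | h
    · simp [h]
    · simpa [hkerx] using (hlater τ ⟨h, hτ.2⟩).posSemidef.dotProduct_mulVec_nonneg x
  exact (hker t₁ ⟨ht₁.1, ht₁b⟩ hpsd x hx0 hkerx).not_ge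
    (((hΓ t₁ ht₁).dotProduct_mulVec_self x).nonneg_of_isMinOn_Icc ht₁b hmin)

theorem dotProduct_mulVec_lyapunov_le [DecidableEq n] {Δ F G N : Matrix n n ℝ} {c : ℝ}
    {x : n → ℝ} (hΔ : Δ.IsHermitian) (hpsd : (Δ + c • 1).PosSemidef) (hx : (Δ + c • 1) *ᵥ x = 0)
    (hN : N.PosSemidef) :
    x ⬝ᵥ (-(Δ * F + Fᵀ * Δ + Gᵀ * Δ * G + N)) *ᵥ x ≤ c * (x ⬝ᵥ (F + Fᵀ + Gᵀ * G) *ᵥ x) := by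
  have hΔx : Δ *ᵥ x = -c • x := by
    rw [add_mulVec, smul_mulVec, one_mulVec] at hx
    rw [neg_smul]
    exact eq_neg_of_add_eq_zero_left hx
  have hxΔ : x ᵥ* Δ = -c • x := by
    rw [← mulVec_transpose, ← conjTranspose_eq_transpose_of_trivial, hΔ.eq, hΔx]
  have hGx := hpsd.dotProduct_mulVec_nonneg (G *ᵥ x)
  have hNx := hN.dotProduct_mulVec_nonneg x
  simp only [star_trivial, add_mulVec, smul_mulVec, one_mulVec, dotProduct_add,
    dotProduct_smul, smul_eq_mul] at hGx hNx
  have hGΔG : x ⬝ᵥ (Gᵀ * Δ * G) *ᵥ x = G *ᵥ x ⬝ᵥ Δ *ᵥ (G *ᵥ x) := by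
    rw [← mulVec_mulVec, ← mulVec_mulVec, dotProduct_mulVec, vecMul_transpose]
  have hGG : x ⬝ᵥ (Gᵀ * G) *ᵥ x = G *ᵥ x ⬝ᵥ G *ᵥ x := by
    rw [← mulVec_mulVec, dotProduct_mulVec, vecMul_transpose]
  have hΔF : x ⬝ᵥ (Δ * F) *ᵥ x = -c * (x ⬝ᵥ F *ᵥ x) := by
    rw [← mulVec_mulVec, dotProduct_mulVec, hxΔ, smul_dotProduct, smul_eq_mul]
  have hFΔ : x ⬝ᵥ (Fᵀ * Δ) *ᵥ x = -c * (x ⬝ᵥ Fᵀ *ᵥ x) := by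
    rw [← mulVec_mulVec, hΔx, mulVec_smul, dotProduct_smul, smul_eq_mul]
  simp only [neg_mulVec, add_mulVec, dotProduct_neg, dotProduct_add, hGΔG, hGG, hΔF, hFΔ]
  linarith

theorem posSemidef_of_hasDerivAt_lyapunov {Δ F G N : ℝ → Matrix n n ℝ} {a b : ℝ}
    (hsymm : ∀ t ∈ Icc a b, (Δ t).IsHermitian) (hF : ContinuousOn F (Icc a b))
    (hG : ContinuousOn G (Icc a b)) (hN : ∀ t ∈ Icc a b, (N t).PosSemidef)
    (hΔ : ∀ t ∈ Icc a b,
      HasDerivAt Δ (-(Δ t * F t + (F t)ᵀ * Δ t + (G t)ᵀ * Δ t * G t + N t)) t)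
    (hb : (Δ b).PosSemidef) :
    ∀ t ∈ Icc a b, (Δ t).PosSemidef := by
  classical
  obtain ⟨K, hK⟩ := isCompact_Icc.exists_forall_dotProduct_mulVec_le
    (H := fun t => F t + (F t)ᵀ + (G t)ᵀ * G t)
    ((hF.add hF.matrix_transpose).add (hG.matrix_transpose.matrix_mul hG))
  -- On a kernel vector of `Δ t + c • 1` the right-hand side is at most `K c |x|²`, and the
  -- barrier `c` grows backwards at the faster rate `K + 1`.
  set c : ℝ → ℝ → ℝ := fun ε t => ε * Real.exp ((K + 1) * (b - t))
  have hc : ∀ ε t, HasDerivAt (c ε) (-(K + 1) * c ε t) t := fun ε t => by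
    have := (((hasDerivAt_id t).const_sub b).const_mul (K + 1)).exp.const_mul ε
    exact this.congr_deriv (by simp only [c, id]; ring)
  have hbarrier : ∀ ε > 0, ∀ t ∈ Icc a b, (Δ t + c ε t • 1).PosDef := by
    intro ε hε
    refine posDef_of_hasDerivAt_of_dotProduct_mulVec_neg (Γ' := fun t =>
      -(Δ t * F t + (F t)ᵀ * Δ t + (G t)ᵀ * Δ t * G t + N t) + (-(K + 1) * c ε t) • 1)
      (fun t ht => ?_) (fun t ht => ?_) ?_ ?_
    · exact (hsymm t ht).add (isHermitian_one.smul (IsSelfAdjoint.all _))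
    · exact (hΔ t ht).add ((hc ε t).smul_const 1)
    · exact PosDef.posSemidef_add hb (PosDef.one.smul (by positivity))
    · intro t ht hpsd x hx0 hx
      have hlyap := dotProduct_mulVec_lyapunov_le (hsymm t ⟨ht.1, ht.2.le⟩) hpsd hx
        (hN t ⟨ht.1, ht.2.le⟩) (F := F t) (G := G t)
      have hKx := hK t ⟨ht.1, ht.2.le⟩ x
      have hxx : 0 < x ⬝ᵥ x := by simpa using dotProduct_self_star_pos_iff.2 hx0
      have hct : 0 < c ε t := by positivity
      simp only [add_mulVec, smul_mulVec, one_mulVec, dotProduct_add, dotProduct_smul,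
        smul_eq_mul] at hlyap hKx ⊢
      nlinarith [mul_le_mul_of_nonneg_left hKx hct.le]
  intro t ht
  refine .of_dotProduct_mulVec_nonneg (hsymm t ht) fun x => ?_
  have hlim : Tendsto (fun ε => star x ⬝ᵥ (Δ t + c ε t • 1) *ᵥ x) (𝓝[>] 0)
      (𝓝 (star x ⬝ᵥ Δ t *ᵥ x)) := by
    refine tendsto_nhdsWithin_of_tendsto_nhds ?_
    have : Continuous (fun ε => star x ⬝ᵥ (Δ t + c ε t • 1) *ᵥ x) := by fun_prop
    simpa [c] using this.tendsto 0
  refine ge_of_tendsto hlim ?_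
  filter_upwards [self_mem_nhdsWithin] with ε hε
  exact (hbarrier ε hε t ht).posSemidef.dotProduct_mulVec_nonneg x

end Matrix

noncomputable section

section Riccati

variable {m k α : Type*} [Fintype m] [Fintype k] [CommRing α]
  (A C : Matrix m m α) (B D : Matrix m k α) (Q : Matrix m m α) (R : Matrix k k α)

-- Closed-loop Lyapunov operator of the feedback `u = K x`; `riccatiMap P` is its minimum over `K`,
-- attained at `riccatiGain P`.
def feedbackLyapunovMap (K : Matrix k m α) (P : Matrix m m α) : Matrix m m α :=
  P * (A + B * K) + (A + B * K)ᵀ * P + (C + D * K)ᵀ * P * (C + D * K) + Q + Kᵀ * R * K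

theorem feedbackLyapunovMap_sub (K : Matrix k m α) (P P' : Matrix m m α) :
    feedbackLyapunovMap A C B D Q R K P - feedbackLyapunovMap A C B D Q R K P' =
      (P - P') * (A + B * K) + (A + B * K)ᵀ * (P - P') +
        (C + D * K)ᵀ * (P - P') * (C + D * K) := by
  simp only [feedbackLyapunovMap]
  noncomm_ring

variable [DecidableEq k]

def riccatiMap (P : Matrix m m α) : Matrix m m α :=
  P * A + Aᵀ * P + Cᵀ * P * C + Q -
    (Bᵀ * P + Dᵀ * P * C)ᵀ * (R + Dᵀ * P * D)⁻¹ * (Bᵀ * P + Dᵀ * P * C)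

def riccatiGain (P : Matrix m m α) : Matrix k m α :=
  -((R + Dᵀ * P * D)⁻¹ * (Bᵀ * P + Dᵀ * P * C))

theorem feedbackLyapunovMap_eq_riccatiMap_add {P : Matrix m m α} (hP : P.IsSymm) (hR : R.IsSymm)
    (hG : IsUnit (R + Dᵀ * P * D).det) (K : Matrix k m α) :
    feedbackLyapunovMap A C B D Q R K P = riccatiMap A C B D Q R P +
      (K - riccatiGain C B D R P)ᵀ * (R + Dᵀ * P * D) * (K - riccatiGain C B D R P) := by
  set G := R + Dᵀ * P * D with hGdef
  set S := Bᵀ * P + Dᵀ * P * C with hSdef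
  set X := G⁻¹ * S with hXdef
  have hGX : G * X = S := by rw [hXdef, ← Matrix.mul_assoc, mul_nonsing_inv _ hG, Matrix.one_mul]
  have hGT : Gᵀ = G := by simp [hGdef, transpose_mul, hR.eq, hP.eq, Matrix.mul_assoc]
  have hXG : Xᵀ * G = Sᵀ := by rw [← hGT, ← transpose_mul, hGX]
  have hST : Sᵀ = P * B + Cᵀ * P * D := by
    simp [hSdef, transpose_mul, hP.eq, Matrix.mul_assoc]
  rw [riccatiMap, riccatiGain, ← hSdef, ← hGdef, Matrix.mul_assoc _ G⁻¹, ← hXdef]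
  clear_value X G S
  have hsq : (K + X)ᵀ * G * (K + X) = Kᵀ * G * K + Kᵀ * S + Sᵀ * K + Sᵀ * X := by
    rw [transpose_add, Matrix.add_mul, Matrix.add_mul, Matrix.mul_add, Matrix.mul_add, hXG,
      Matrix.mul_assoc Kᵀ G X, hGX]
    abel
  rw [sub_neg_eq_add, hsq, hST, hGdef, hSdef, feedbackLyapunovMap]
  simp only [transpose_add, transpose_mul, Matrix.mul_add, Matrix.add_mul, Matrix.mul_assoc]
  abel

theorem riccatiMap_sub_riccatiMap {P P' : Matrix m m α} (hP : P.IsSymm) (hP' : P'.IsSymm)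
    (hR : R.IsSymm) (hG : IsUnit (R + Dᵀ * P * D).det) (hG' : IsUnit (R + Dᵀ * P' * D).det) :
    riccatiMap A C B D Q R P - riccatiMap A C B D Q R P' =
      (P - P') * (A + B * riccatiGain C B D R P) + (A + B * riccatiGain C B D R P)ᵀ * (P - P') +
        (C + D * riccatiGain C B D R P)ᵀ * (P - P') * (C + D * riccatiGain C B D R P) +
        (riccatiGain C B D R P - riccatiGain C B D R P')ᵀ * (R + Dᵀ * P' * D) *
          (riccatiGain C B D R P - riccatiGain C B D R P') := by
  have h := feedbackLyapunovMap_sub A C B D Q R (riccatiGain C B D R P) P P'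
  rw [feedbackLyapunovMap_eq_riccatiMap_add A C B D Q R hP hR hG,
    feedbackLyapunovMap_eq_riccatiMap_add A C B D Q R hP' hR hG', sub_self,
    transpose_zero, Matrix.zero_mul, Matrix.zero_mul, add_zero] at h
  rw [← h]
  abel

end Riccati

theorem ContinuousOn.riccatiGain {X m k 𝕜 : Type*} [TopologicalSpace X] [Fintype m] [Fintype k]
    [DecidableEq k] [Field 𝕜] [TopologicalSpace 𝕜] [IsTopologicalRing 𝕜] [ContinuousInv₀ 𝕜]
    {s : Set X} {C P : X → Matrix m m 𝕜} {B D : X → Matrix m k 𝕜} {R : X → Matrix k k 𝕜}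
    (hC : ContinuousOn C s) (hB : ContinuousOn B s) (hD : ContinuousOn D s)
    (hR : ContinuousOn R s) (hP : ContinuousOn P s)
    (hdet : ∀ x ∈ s, (R x + (D x)ᵀ * P x * D x).det ≠ 0) :
    ContinuousOn (fun x => riccatiGain (C x) (B x) (D x) (R x) (P x)) s :=
  (((hR.add ((hD.matrix_transpose.matrix_mul hP).matrix_mul hD)).matrix_inv hdet).matrix_mul
    ((hB.matrix_transpose.matrix_mul hP).add
      ((hD.matrix_transpose.matrix_mul hP).matrix_mul hC))).neg

end

theorem stmt_15_general {n l : ℕ} (T : ℝ)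
    (A C : ℝ → Matrix (Fin n) (Fin n) ℝ) (B D : ℝ → Matrix (Fin n) (Fin l) ℝ)
    (Q : ℝ → Matrix (Fin n) (Fin n) ℝ) (R : ℝ → Matrix (Fin l) (Fin l) ℝ)
    (hA : Continuous A) (hC : Continuous C) (hB : Continuous B) (hD : Continuous D)
    (hR : Continuous R) (hRsym : ∀ t, (R t).IsHermitian)
    (Pt Ph : ℝ → Matrix (Fin n) (Fin n) ℝ)
    (hPtsym : ∀ t, (Pt t).IsHermitian) (hPhsym : ∀ t, (Ph t).IsHermitian)
    (hPtpos : ∀ t ∈ Set.Icc (0 : ℝ) T, (R t + (D t)ᵀ * Pt t * D t).PosDef)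
    (hPhpos : ∀ t ∈ Set.Icc (0 : ℝ) T, (R t + (D t)ᵀ * Ph t * D t).PosDef)
    (hPtode : ∀ t ∈ Set.Icc (0 : ℝ) T, HasDerivAt Pt
      (-(Pt t * A t + (A t)ᵀ * Pt t + (C t)ᵀ * Pt t * C t + Q t -
        ((B t)ᵀ * Pt t + (D t)ᵀ * Pt t * C t)ᵀ *
          (R t + (D t)ᵀ * Pt t * D t)⁻¹ *
          ((B t)ᵀ * Pt t + (D t)ᵀ * Pt t * C t))) t)
    (hPhode : ∀ t ∈ Set.Icc (0 : ℝ) T, HasDerivAt Ph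
      (-(Ph t * A t + (A t)ᵀ * Ph t + (C t)ᵀ * Ph t * C t + Q t -
        ((B t)ᵀ * Ph t + (D t)ᵀ * Ph t * C t)ᵀ *
          (R t + (D t)ᵀ * Ph t * D t)⁻¹ *
          ((B t)ᵀ * Ph t + (D t)ᵀ * Ph t * C t))) t)
    (hTle : (Pt T - Ph T).PosSemidef) :
    ∀ t ∈ Set.Icc (0 : ℝ) T, (Pt t - Ph t).PosSemidef := by
  set Kt := fun t => riccatiGain (C t) (B t) (D t) (R t) (Pt t)
  set Kh := fun t => riccatiGain (C t) (B t) (D t) (R t) (Ph t)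
  have hKt : ContinuousOn Kt (Set.Icc 0 T) :=
    hC.continuousOn.riccatiGain hB.continuousOn hD.continuousOn hR.continuousOn
      (fun t ht => (hPtode t ht).continuousAt.continuousWithinAt)
      fun t ht => (hPtpos t ht).det_pos.ne'
  refine posSemidef_of_hasDerivAt_lyapunov (Δ := fun t => Pt t - Ph t)
    (F := fun t => A t + B t * Kt t) (G := fun t => C t + D t * Kt t)
    (N := fun t => (Kt t - Kh t)ᵀ * (R t + (D t)ᵀ * Ph t * D t) * (Kt t - Kh t))
    (fun t _ => (hPtsym t).sub (hPhsym t)) (hA.continuousOn.add (hB.continuousOn.matrix_mul hKt))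
    (hC.continuousOn.add (hD.continuousOn.matrix_mul hKt)) (fun t ht => ?_) (fun t ht => ?_) hTle
  · simpa [conjTranspose_eq_transpose_of_trivial] using
      (hPhpos t ht).posSemidef.conjTranspose_mul_mul_same (Kt t - Kh t)
  · have hdiff : HasDerivAt (fun τ => Pt τ - Ph τ)
        (-riccatiMap (A t) (C t) (B t) (D t) (Q t) (R t) (Pt t) -
          -riccatiMap (A t) (C t) (B t) (D t) (Q t) (R t) (Ph t)) t :=
      (hPtode t ht).sub (hPhode t ht)
    rwa [neg_sub_neg, ← neg_sub, riccatiMap_sub_riccatiMap _ _ _ _ _ _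
      (isHermitian_iff_isSymm.1 (hPtsym t)) (isHermitian_iff_isSymm.1 (hPhsym t))
      (isHermitian_iff_isSymm.1 (hRsym t)) (hPtpos t ht).det_pos.ne'.isUnit
      (hPhpos t ht).det_pos.ne'.isUnit] at hdiff

/-- Riccati comparison lemma (ODE formulation): if two solutions
of the same Riccati equation satisfy P̃(T) ≥ P̂(T), then P̃(t) ≥ P̂(t). -/
theorem stmt_15 {n l : ℕ} (T : ℝ) (hT : 0 < T)
    (A C : ℝ → Matrix (Fin n) (Fin n) ℝ) (B D : ℝ → Matrix (Fin n) (Fin l) ℝ)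
    (Q : ℝ → Matrix (Fin n) (Fin n) ℝ) (R : ℝ → Matrix (Fin l) (Fin l) ℝ)
    (hA : Continuous A) (hC : Continuous C) (hB : Continuous B) (hD : Continuous D)
    (hQ : Continuous Q) (hQsym : ∀ t, (Q t).IsHermitian)
    (hR : Continuous R) (hRsym : ∀ t, (R t).IsHermitian)
    (Pt Ph : ℝ → Matrix (Fin n) (Fin n) ℝ)
    (hPtsym : ∀ t, (Pt t).IsHermitian) (hPhsym : ∀ t, (Ph t).IsHermitian)
    (hPtpos : ∀ t ∈ Set.Icc (0 : ℝ) T, (R t + (D t)ᵀ * Pt t * D t).PosDef)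
    (hPhpos : ∀ t ∈ Set.Icc (0 : ℝ) T, (R t + (D t)ᵀ * Ph t * D t).PosDef)
    (hPtode : ∀ t ∈ Set.Icc (0 : ℝ) T, HasDerivAt Pt
      (-(Pt t * A t + (A t)ᵀ * Pt t + (C t)ᵀ * Pt t * C t + Q t -
        ((B t)ᵀ * Pt t + (D t)ᵀ * Pt t * C t)ᵀ *
          (R t + (D t)ᵀ * Pt t * D t)⁻¹ *
          ((B t)ᵀ * Pt t + (D t)ᵀ * Pt t * C t))) t)
    (hPhode : ∀ t ∈ Set.Icc (0 : ℝ) T, HasDerivAt Ph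
      (-(Ph t * A t + (A t)ᵀ * Ph t + (C t)ᵀ * Ph t * C t + Q t -
        ((B t)ᵀ * Ph t + (D t)ᵀ * Ph t * C t)ᵀ *
          (R t + (D t)ᵀ * Ph t * D t)⁻¹ *
          ((B t)ᵀ * Ph t + (D t)ᵀ * Ph t * C t))) t)
    (hTle : (Pt T - Ph T).PosSemidef) :
    ∀ t ∈ Set.Icc (0 : ℝ) T, (Pt t - Ph t).PosSemidef :=
  stmt_15_general T A C B D Q R hA hC hB hD hR hRsym Pt Ph hPtsym hPhsym hPtpos hPhpos hPtode hPhode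
    hTle
end

section
/- Let L1 = I_m - P2 C2 + P3 C4 and L2 = I_n - P2ᵀ C2ᵀ + (P1 C2 + P2ᵀ C4) L1⁻¹ P3 C2ᵀ, where P1 ∈ S^n, P3 ∈ S^m, P2 ∈ R^{m×n}, C2 ∈ R^{n×m}, C4 ∈ S^m, and L1 is invertible. Suppose P3 is invertible and set P̃1 = P1 + P2ᵀ P3⁻¹ P2, P̃2 = -P3⁻¹ P2, D = C4 + (C2ᵀ P̃1 + P̃2) C2 + C2ᵀ P̃2ᵀ + P3⁻¹, and assume D is invertible. Then L2 is invertible and (C2ᵀ P̃1 + P̃2)ᵀ D⁻¹ = L2⁻¹ (C2ᵀ P̃1 + P̃2)ᵀ L1⁻¹ P3. -/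
open Matrix

/-- relation (app-2) of the paper: L2 is invertible and
(C2ᵀ P̃1 + P̃2)ᵀ D⁻¹ = L2⁻¹ (C2ᵀ P̃1 + P̃2)ᵀ L1⁻¹ P3. -/
theorem stmt_19 {n m : ℕ}
    (P1 : Matrix (Fin n) (Fin n) ℝ) (P2 : Matrix (Fin m) (Fin n) ℝ)
    (P3 : Matrix (Fin m) (Fin m) ℝ)
    (C2 : Matrix (Fin n) (Fin m) ℝ) (C4 : Matrix (Fin m) (Fin m) ℝ)
    (hP1 : P1.IsHermitian) (hP3sym : P3.IsHermitian) (hC4 : C4.IsHermitian)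
    (hP3 : IsUnit P3)
    (Pt1 : Matrix (Fin n) (Fin n) ℝ) (Pt2 : Matrix (Fin m) (Fin n) ℝ)
    (hPt1 : Pt1 = P1 + P2ᵀ * P3⁻¹ * P2) (hPt2 : Pt2 = -(P3⁻¹ * P2))
    (L1 D : Matrix (Fin m) (Fin m) ℝ) (L2 : Matrix (Fin n) (Fin n) ℝ)
    (hL1 : L1 = 1 - P2 * C2 + P3 * C4) (hL1unit : IsUnit L1)
    (hD : D = C4 + (C2ᵀ * Pt1 + Pt2) * C2 + C2ᵀ * Pt2ᵀ + P3⁻¹)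
    (hDunit : IsUnit D)
    (hL2 : L2 = (1 : Matrix (Fin n) (Fin n) ℝ) - P2ᵀ * C2ᵀ +
      (P1 * C2 + P2ᵀ * C4) * L1⁻¹ * P3 * C2ᵀ) :
    IsUnit L2 ∧
      (C2ᵀ * Pt1 + Pt2)ᵀ * D⁻¹ = L2⁻¹ * (C2ᵀ * Pt1 + Pt2)ᵀ * L1⁻¹ * P3 := by
  have hP3d : IsUnit P3.det := (Matrix.isUnit_iff_isUnit_det P3).mp hP3
  have hL1d : IsUnit L1.det := (Matrix.isUnit_iff_isUnit_det L1).mp hL1unit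
  have hDd : IsUnit D.det := (Matrix.isUnit_iff_isUnit_det D).mp hDunit
  have hP1t : P1ᵀ = P1 := by have h := hP1; simp at h; exact h
  have hP3t : P3ᵀ = P3 := by have h := hP3sym; simp at h; exact h
  have hP3it : P3⁻¹ᵀ = P3⁻¹ := by rw [Matrix.transpose_nonsing_inv, hP3t]
  set M : Matrix (Fin n) (Fin m) ℝ := (C2ᵀ * Pt1 + Pt2)ᵀ with hM
  have hMeq : M = Pt1 * C2 + Pt2ᵀ := by
    rw [hM, transpose_add, transpose_mul, transpose_transpose]
    congr 1
    rw [hPt1]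
    simp [transpose_add, transpose_mul, hP1t, hP3it, Matrix.mul_assoc]
  -- polynomial fact: M = P1*C2 + P2ᵀ*C4 - P2ᵀ*P3⁻¹*L1
  have hPt2t : Pt2ᵀ = -(P2ᵀ * P3⁻¹) := by
    rw [hPt2, transpose_neg, transpose_mul, hP3it]
  have keyM : M = P1 * C2 + P2ᵀ * C4 - P2ᵀ * P3⁻¹ * L1 := by
    rw [hMeq, hPt1, hPt2t, hL1]
    simp only [Matrix.add_mul, Matrix.mul_add, Matrix.mul_sub, Matrix.sub_mul,
      Matrix.mul_one, Matrix.mul_assoc, Matrix.mul_nonsing_inv_cancel_left _ _ hP3d, Matrix.nonsing_inv_mul_cancel_left _ _ hP3d]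
    abel
  have key1 : P3 * D = L1 + P3 * C2ᵀ * M := by
    rw [hD, hMeq, hPt2t, hPt1, hPt2, hL1]
    simp only [Matrix.add_mul, Matrix.mul_add, Matrix.mul_sub, Matrix.sub_mul,
      Matrix.mul_one, Matrix.one_mul, Matrix.mul_neg, Matrix.neg_mul, Matrix.mul_assoc,
      Matrix.mul_nonsing_inv_cancel_left _ _ hP3d,
      Matrix.nonsing_inv_mul_cancel_left _ _ hP3d,
      Matrix.mul_nonsing_inv _ hP3d]
    abel
  -- M * L1⁻¹ * P3 = (P1*C2 + P2ᵀ*C4) * L1⁻¹ * P3 - P2ᵀ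
  have keyMKP : M * L1⁻¹ * P3 = (P1 * C2 + P2ᵀ * C4) * L1⁻¹ * P3 - P2ᵀ := by
    rw [keyM]
    simp only [Matrix.sub_mul, Matrix.mul_assoc,
      Matrix.mul_nonsing_inv_cancel_left _ _ hL1d,
      Matrix.nonsing_inv_mul _ hP3d, Matrix.mul_one]
  have hL2form : L2 = 1 + M * L1⁻¹ * P3 * C2ᵀ := by
    rw [hL2, keyMKP]
    simp only [Matrix.sub_mul]
    abel
  have hdet : L2.det = (L1⁻¹ * (P3 * D)).det := by
    rw [hL2form, Matrix.mul_assoc, Matrix.mul_assoc, Matrix.det_one_add_mul_comm]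
    congr 1
    rw [key1, Matrix.mul_add, Matrix.nonsing_inv_mul _ hL1d]
    simp [Matrix.mul_assoc]
  have hL1invd : IsUnit L1⁻¹.det := by
    rw [Matrix.det_nonsing_inv]
    rw [Ring.inverse_of_isUnit hL1d]; exact Units.isUnit _
  have hL2unit : IsUnit L2 := by
    rw [Matrix.isUnit_iff_isUnit_det, hdet, Matrix.det_mul, Matrix.det_mul]
    exact hL1invd.mul (hP3d.mul hDd)
  have hL2d : IsUnit L2.det := (Matrix.isUnit_iff_isUnit_det L2).mp hL2unit
  have keyfinal : L2 * M = M * (L1⁻¹ * (P3 * D)) := by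
    rw [key1]
    simp only [hL2form, Matrix.add_mul, Matrix.one_mul, Matrix.mul_add,
      Matrix.nonsing_inv_mul _ hL1d, Matrix.mul_one, Matrix.mul_assoc]
  have hMrw : M = L2⁻¹ * (M * (L1⁻¹ * (P3 * D))) := by
    rw [← keyfinal, Matrix.nonsing_inv_mul_cancel_left _ _ hL2d]
  refine ⟨hL2unit, ?_⟩
  conv_lhs => rw [hMrw]
  simp only [Matrix.mul_assoc, Matrix.mul_nonsing_inv _ hDd, Matrix.mul_one]
end
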